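/- arXiv:1708.01932 — 6 statements merged into one kernel-verified Lean document; each statement's English description precedes it below -/
import Mathlib

section
/- Let m be an integer, N a positive integer, and set M = max(|m|, |m−1|). If X is an N×N matrix with integer entries such that every row of X contains at most one entry equal to −m, at most one entry equal to m−1, and at most one entry equal to 1, all remaining entries of the row being 0, then |det X| ≤ M^N. -/
/-!
A row `-m eₐ + (m - 1) e_b + e_c` of `X` equals both `(m - 1) (e_b - eₐ) + (e_c - eₐ)` and
`m (e_b - eₐ) + (e_c - e_b)`, so `X = c U + V` with `c ∈ {m - 1, m}` and every row of `U` and `V`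
a difference of at most two unit vectors. Expanding multilinearly in the rows,
`det X = ∑ₛ c^|s| det Wₛ`, where each `Wₛ` mixes rows of `U` and `V`; such a matrix is (the
transpose of) an incidence matrix of a directed graph, hence `|det Wₛ| ≤ 1` by Laplace expansion,
and `|det X| ≤ (|c| + 1)^N`. For integers `min |m - 1| |m| + 1 = max |m| |m - 1|`.
-/

open Finset

variable {n R : Type*}

/-- A row of the transposed incidence matrix of a directed graph, endpoints possibly missing. -/
def IsIncidenceRow [Ring R] (r : n → R) : Prop :=
  ∃ S T : Set n, S.Subsingleton ∧ T.Subsingleton ∧ r = S.indicator 1 - T.indicator 1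

namespace IsIncidenceRow

variable [Ring R] {r : n → R}

theorem comp {m : Type*} (hr : IsIncidenceRow r) {f : m → n} (hf : f.Injective) :
    IsIncidenceRow (r ∘ f) := by
  obtain ⟨S, T, hS, hT, rfl⟩ := hr
  exact ⟨f ⁻¹' S, f ⁻¹' T, hS.preimage hf, hT.preimage hf, rfl⟩

theorem sum_eq_zero_or_sum_abs_le_one [LinearOrder R] [IsOrderedRing R] [Fintype n]
    (hr : IsIncidenceRow r) : ∑ j, r j = 0 ∨ ∑ j, |r j| ≤ 1 := by
  classical
  obtain ⟨S, T, hS, hT, rfl⟩ := hr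
  rcases hS.eq_empty_or_singleton with rfl | ⟨a, rfl⟩ <;>
    rcases hT.eq_empty_or_singleton with rfl | ⟨b, rfl⟩
  · simp
  · right; simp [Pi.single_apply, apply_ite]
  · right; simp [Pi.single_apply, apply_ite]
  · left; simp [sum_sub_distrib]

end IsIncidenceRow

namespace Matrix

variable [Fintype n] [DecidableEq n]

theorem det_eq_zero_of_row_sums_eq_zero [CommRing R] [Nonempty n] (A : Matrix n n R)
    (hA : ∀ i, ∑ j, A i j = 0) : A.det = 0 :=
  det_eq_zero_of_mulVec_eq_zero_of_mem_nonZeroDivisors (v := 1) (i := Classical.arbitrary n)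
    (funext fun i => by simpa [mulVec, dotProduct] using hA i) (one_mem _)

theorem det_smul_add_eq_sum [CommRing R] (c : R) (U V : Matrix n n R) :
    (c • U + V).det = ∑ s : Finset n, c ^ #s * det (s.piecewise U V) := by
  refine (detRowAlternating.map_add_univ (c • U) V).trans (sum_congr rfl fun s _ => ?_)
  have h : s.piecewise (c • U) V
      = s.piecewise (fun i => c • s.piecewise U V i) (s.piecewise U V) := by
    ext i j
    by_cases hi : i ∈ s <;> simp [hi, Finset.piecewise]
  rw [h]
  exact (detRowAlternating.map_piecewise_smul (fun _ => c) (s.piecewise U V) s).trans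
    (by simp [det])

section Ordered

variable [CommRing R] [LinearOrder R] [IsStrictOrderedRing R]

theorem abs_det_le_one_of_isIncidenceRow :
    ∀ {k : ℕ} (W : Matrix (Fin k) (Fin k) R), (∀ i, IsIncidenceRow (W i)) → |W.det| ≤ 1
  | 0, W, _ => by simp
  | k + 1, W, hW => by
    by_cases hsum : ∀ i, ∑ j, W i j = 0
    · rw [W.det_eq_zero_of_row_sums_eq_zero hsum, abs_zero]
      exact zero_le_one
    obtain ⟨i, hi⟩ := not_forall.mp hsum
    have hrow : ∑ j, |W i j| ≤ 1 := (hW i).sum_eq_zero_or_sum_abs_le_one.resolve_left hi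
    have hminor (j : Fin (k + 1)) : |(W.submatrix i.succAbove j.succAbove).det| ≤ 1 :=
      abs_det_le_one_of_isIncidenceRow _ fun _ => (hW _).comp Fin.succAbove_right_injective
    rw [det_succ_row W i]
    calc _ ≤ ∑ j : Fin (k + 1),
            |(-1) ^ (i + j : ℕ) * W i j * (W.submatrix i.succAbove j.succAbove).det| :=
          abs_sum_le_sum_abs _ _
      _ ≤ ∑ j, |W i j| := sum_le_sum fun j _ => by
          rw [abs_mul, abs_mul, abs_pow, abs_neg, abs_one, one_pow, one_mul]
          exact mul_le_of_le_one_right (abs_nonneg _) (hminor j)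
      _ ≤ 1 := hrow

theorem abs_det_smul_add_le {k : ℕ} (c : R) (U V : Matrix (Fin k) (Fin k) R)
    (hU : ∀ i, IsIncidenceRow (U i)) (hV : ∀ i, IsIncidenceRow (V i)) :
    |(c • U + V).det| ≤ (|c| + 1) ^ k := by
  rw [det_smul_add_eq_sum, ← Fin.sum_pow_mul_eq_add_pow]
  calc _ ≤ ∑ s : Finset (Fin k), |c ^ #s * det (s.piecewise U V)| := abs_sum_le_sum_abs _ _
    _ ≤ ∑ s : Finset (Fin k), |c| ^ #s * 1 ^ (k - #s) := sum_le_sum fun s _ => by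
        rw [one_pow, mul_one, abs_mul, abs_pow]
        exact mul_le_of_le_one_right (by positivity) <| abs_det_le_one_of_isIncidenceRow _
          fun i => s.piecewise_cases U V IsIncidenceRow (hU i) (hV i)

end Ordered

end Matrix

theorem Set.subsingleton_setOf_of_card_filter_le_one {α : Type*} [Fintype α] {p : α → Prop}
    [DecidablePred p] (h : #{a | p a} ≤ 1) : {a | p a}.Subsingleton := by
  simpa using card_le_one_iff_subsingleton.mp h

noncomputable def indicatorMatrix {m : Type*} [Zero R] [One R] (S : m → Set n) : Matrix m n R :=
  Matrix.of fun i => (S i).indicator 1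

theorem abs_det_le_of_eq_palette {k : ℕ} (m : ℤ) (X : Matrix (Fin k) (Fin k) ℤ)
    (A B C : Fin k → Set (Fin k)) (hA : ∀ i, (A i).Subsingleton)
    (hB : ∀ i, (B i).Subsingleton) (hC : ∀ i, (C i).Subsingleton)
    (hX : X = -m • indicatorMatrix A + (m - 1) • indicatorMatrix B + indicatorMatrix C) :
    |X.det| ≤ max |m| |m - 1| ^ k := by
  have h₁ : |X.det| ≤ (|m - 1| + 1) ^ k := by
    rw [show X = (m - 1) • (indicatorMatrix B - indicatorMatrix A)
      + (indicatorMatrix C - indicatorMatrix A) by rw [hX]; module]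
    exact Matrix.abs_det_smul_add_le _ _ _ (fun i => ⟨_, _, hB i, hA i, rfl⟩)
      (fun i => ⟨_, _, hC i, hA i, rfl⟩)
  have h₂ : |X.det| ≤ (|m| + 1) ^ k := by
    rw [show X = m • (indicatorMatrix B - indicatorMatrix A)
      + (indicatorMatrix C - indicatorMatrix B) by rw [hX]; module]
    exact Matrix.abs_det_smul_add_le _ _ _ (fun i => ⟨_, _, hB i, hA i, rfl⟩)
      (fun i => ⟨_, _, hC i, hB i, rfl⟩)
  have hM : max |m| |m - 1| = |m - 1| + 1 ∨ max |m| |m - 1| = |m| + 1 := by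
    simp only [abs_eq_max_neg]; omega
  rcases hM with hM | hM <;> rw [hM] <;> assumption

theorem abs_det_le_of_rows_palette_general (m : ℤ) (N : ℕ)
    (X : Matrix (Fin N) (Fin N) ℤ)
    (hmem : ∀ i j, X i j = -m ∨ X i j = m - 1 ∨ X i j = 1 ∨ X i j = 0)
    (hneg : ∀ i, (Finset.univ.filter (fun j => X i j = -m)).card ≤ 1)
    (hm1 : ∀ i, (Finset.univ.filter (fun j => X i j = m - 1)).card ≤ 1)
    (hone : ∀ i, (Finset.univ.filter (fun j => X i j = 1)).card ≤ 1) :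
    |X.det| ≤ (max |m| |m - 1|) ^ N := by
  -- `C` skips entries already in `A` or `B`: `1 = -m` when `m = -1`, and `1 = m - 1` when `m = 2`.
  let A i : Set (Fin N) := {j | X i j = -m}
  let B i : Set (Fin N) := {j | X i j = m - 1}
  let C i : Set (Fin N) := {j | X i j = 1 ∧ X i j ≠ -m ∧ X i j ≠ m - 1}
  refine abs_det_le_of_eq_palette m X A B C
    (fun i => Set.subsingleton_setOf_of_card_filter_le_one (hneg i))
    (fun i => Set.subsingleton_setOf_of_card_filter_le_one (hm1 i))
    (fun i => (Set.subsingleton_setOf_of_card_filter_le_one (hone i)).anti fun _ hj => hj.1) ?_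
  ext i j
  simp only [indicatorMatrix, A, B, C, Matrix.add_apply, Matrix.smul_apply, Matrix.of_apply,
    Set.indicator_apply, Set.mem_ofPred_eq, Pi.one_apply, smul_eq_mul]
  rcases hmem i j with h | h | h | h <;> split_ifs <;> omega

/-- If every row of the `N × N` integer matrix `X` contains at most one
entry equal to `-m`, at most one entry equal to `m - 1`, and at most one entry equal to `1`,
all remaining entries being `0`, then `|det X| ≤ M ^ N` where `M = max |m| |m - 1|`. -/
theorem abs_det_le_of_rows_palette (m : ℤ) (N : ℕ) (hN : 0 < N)
    (X : Matrix (Fin N) (Fin N) ℤ)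
    (hmem : ∀ i j, X i j = -m ∨ X i j = m - 1 ∨ X i j = 1 ∨ X i j = 0)
    (hneg : ∀ i, (Finset.univ.filter (fun j => X i j = -m)).card ≤ 1)
    (hm1 : ∀ i, (Finset.univ.filter (fun j => X i j = m - 1)).card ≤ 1)
    (hone : ∀ i, (Finset.univ.filter (fun j => X i j = 1)).card ≤ 1) :
    |X.det| ≤ (max |m| |m - 1|) ^ N :=
  abs_det_le_of_rows_palette_general m N X hmem hneg hm1 hone
end

section
/- Let p be an odd prime and m an integer with 1 < m < p such that, in ZMod p, m ≠ 2, m² − m + 1 ≠ 0, and 2m − 1 ≠ 0. Let a, b, c ∈ ZMod p be pairwise distinct with c = m·a + (1−m)·b. Then none of the following equalities holds in ZMod p: b = m·a + (1−m)·c, b = m·c + (1−m)·a, a = m·b + (1−m)·c, c = m·b + (1−m)·a. (This is the algebraic core of the fact that, when none of the conditions m ≡ 2, m²−m+1 ≡ 0, 2m−1 ≡ 0 mod p holds, a non-trivial (p,m)-coloring needs at least four distinct colors.) -/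
/-- Let `p` be an odd prime and `m` an integer with `1 < m < p` such that,
in `ZMod p`, `m ≠ 2`, `m² − m + 1 ≠ 0`, and `2m − 1 ≠ 0`.  If `a, b, c ∈ ZMod p` are
pairwise distinct and `c = m·a + (1−m)·b`, then none of the four compatibility equalities
`b = m·a + (1−m)·c`, `b = m·c + (1−m)·a`, `a = m·b + (1−m)·c`, `c = m·b + (1−m)·a` holds. -/
theorem coloring_needs_fourth_color (p : ℕ) (hp : p.Prime) (hodd : Odd p)
    (m : ℤ) (hm1 : 1 < m) (hmp : m < p)
    (hm2 : (m : ZMod p) ≠ 2)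
    (hquad : (m : ZMod p) ^ 2 - (m : ZMod p) + 1 ≠ 0)
    (hlin : 2 * (m : ZMod p) - 1 ≠ 0)
    (a b c : ZMod p) (hab : a ≠ b) (hac : a ≠ c) (hbc : b ≠ c)
    (hcol : c = (m : ZMod p) * a + (1 - (m : ZMod p)) * b) :
    ¬ (b = (m : ZMod p) * a + (1 - (m : ZMod p)) * c) ∧
    ¬ (b = (m : ZMod p) * c + (1 - (m : ZMod p)) * a) ∧
    ¬ (a = (m : ZMod p) * b + (1 - (m : ZMod p)) * c) ∧
    ¬ (c = (m : ZMod p) * b + (1 - (m : ZMod p)) * a) := by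
  haveI : Fact p.Prime := ⟨hp⟩
  set M : ZMod p := (m : ZMod p) with hM
  have hM0 : M ≠ 0 := by
    rw [hM, Ne, ZMod.intCast_zmod_eq_zero_iff_dvd]
    intro hdvd
    have := Int.le_of_dvd (by linarith) hdvd
    omega
  have hM2' : (2 : ZMod p) - M ≠ 0 := fun h => hm2 ((sub_eq_zero.mp h).symm)
  have hba : b - a ≠ 0 := sub_ne_zero.mpr (Ne.symm hab)
  have hab' : a - b ≠ 0 := sub_ne_zero.mpr hab
  subst hcol
  refine ⟨?_, ?_, ?_, ?_⟩
  · intro h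
    have key : M * ((2:ZMod p) - M) * (b - a) = 0 := by linear_combination h
    rcases mul_eq_zero.mp key with h1 | h1
    · rcases mul_eq_zero.mp h1 with h2 | h2
      · exact hM0 h2
      · exact hM2' h2
    · exact hba h1
  · intro h
    have key : (M ^ 2 - M + 1) * (b - a) = 0 := by linear_combination h
    rcases mul_eq_zero.mp key with h1 | h1
    · exact hquad h1
    · exact hba h1
  · intro h
    have key : (M ^ 2 - M + 1) * (a - b) = 0 := by linear_combination h
    rcases mul_eq_zero.mp key with h1 | h1
    · exact hquad h1
    · exact hab' h1
  · intro h
    have key : (2 * M - 1) * (a - b) = 0 := by linear_combination h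
    rcases mul_eq_zero.mp key with h1 | h1
    · exact hlin h1
    · exact hab' h1
end

section
/- Let p be an odd prime and m an integer with 1 < m < p, and let f : ZMod p → ZMod p. Then f is a bijection satisfying f(m·a + (1−m)·b) = m·f(a) + (1−m)·f(b) for all a, b ∈ ZMod p if and only if there exist a nonzero λ ∈ ZMod p and μ ∈ ZMod p such that f(x) = λ·x + μ for all x ∈ ZMod p. In other words, the automorphism group of the linear Alexander quandle LAQ(p,m) is exactly the affine group of ZMod p; in particular it depends only on p and not on m. -/
/-!
Translating so that `0 ↦ 0`, the identity `m·a + (1 − m)·b` splits any sum `u + v` as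
`m·(u/m) + (1 − m)·(v/(1 − m))`, because `m` and `1 − m` are invertible; so an automorphism of
`LAQ(p, m)` is an additive map up to translation. Additive self-maps of `ZMod p` are
multiplication by a scalar, and bijectivity makes that scalar nonzero. Conversely every affine
map commutes with affine combinations.
-/

def IsAlexanderQuandleHom {R : Type*} [Ring R] (c : R) (f : R → R) : Prop :=
  ∀ a b : R, f (c * a + (1 - c) * b) = c * f a + (1 - c) * f b

theorem isAlexanderQuandleHom_affine {R : Type*} [CommRing R] (c l μ : R) :
    IsAlexanderQuandleHom c (fun x => l * x + μ) := by
  intro a b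
  ring

theorem bijective_affine {K : Type*} [Field K] {l : K} (hl : l ≠ 0) (μ : K) :
    Function.Bijective (fun x => l * x + μ) :=
  (Equiv.addRight μ).bijective.comp (Equiv.mulLeft₀ l hl).bijective

namespace IsAlexanderQuandleHom

variable {K : Type*} [Field K] {c : K} {f : K → K}

theorem map_add (hf : IsAlexanderQuandleHom c f) (hc₀ : c ≠ 0) (hc₁ : c ≠ 1) (u v : K) :
    f (u + v) = f u + f v - f 0 := by
  have hc₁' : 1 - c ≠ 0 := sub_ne_zero.mpr hc₁.symm
  have hu : c * (c⁻¹ * u) = u := mul_inv_cancel_left₀ hc₀ u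
  have hv : (1 - c) * ((1 - c)⁻¹ * v) = v := mul_inv_cancel_left₀ hc₁' v
  have huv := hf (c⁻¹ * u) ((1 - c)⁻¹ * v)
  have hu0 := hf (c⁻¹ * u) 0
  have h0v := hf 0 ((1 - c)⁻¹ * v)
  rw [hu, hv] at huv
  rw [hu, mul_zero, add_zero] at hu0
  rw [hv, mul_zero, zero_add] at h0v
  rw [huv, hu0, h0v]
  ring

def toAddMonoidHom (hf : IsAlexanderQuandleHom c f) (hc₀ : c ≠ 0) (hc₁ : c ≠ 1) : K →+ K :=
  AddMonoidHom.mk' (fun x => f x - f 0) fun u v => by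
    rw [hf.map_add hc₀ hc₁]
    ring

end IsAlexanderQuandleHom

theorem IsAlexanderQuandleHom.eq_affine_zmod {p : ℕ} [Fact p.Prime] {c : ZMod p}
    {f : ZMod p → ZMod p} (hf : IsAlexanderQuandleHom c f) (hc₀ : c ≠ 0) (hc₁ : c ≠ 1)
    (x : ZMod p) : f x = (f 1 - f 0) * x + f 0 := by
  have h := ZMod.map_smul (hf.toAddMonoidHom hc₀ hc₁) x 1
  simp only [toAddMonoidHom, AddMonoidHom.mk'_apply, smul_eq_mul, mul_one] at h
  linear_combination h

theorem ZMod.intCast_ne_zero_of_pos_of_lt {p : ℕ} {k : ℤ} (hk₀ : 0 < k) (hkp : k < p) :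
    (k : ZMod p) ≠ 0 := by
  rw [Ne, ZMod.intCast_zmod_eq_zero_iff_dvd]
  exact fun h => (Int.le_of_dvd hk₀ h).not_gt hkp

theorem laq_automorphism_iff_affine_general (p : ℕ) (hp : p.Prime)
    (m : ℤ) (hm1 : 1 < m) (hmp : m < p)
    (f : ZMod p → ZMod p) :
    (Function.Bijective f ∧
      ∀ a b : ZMod p, f ((m : ZMod p) * a + (1 - (m : ZMod p)) * b) =
        (m : ZMod p) * f a + (1 - (m : ZMod p)) * f b) ↔
    ∃ (l μ : ZMod p), l ≠ 0 ∧ ∀ x : ZMod p, f x = l * x + μ := by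
  have : Fact p.Prime := ⟨hp⟩
  have hm₀ : (m : ZMod p) ≠ 0 := ZMod.intCast_ne_zero_of_pos_of_lt (by omega) hmp
  have hm₁ : (m : ZMod p) ≠ 1 := by
    intro h
    apply ZMod.intCast_ne_zero_of_pos_of_lt (p := p) (k := m - 1) (by omega) (by omega)
    push_cast
    rw [h, sub_self]
  constructor
  · rintro ⟨hbij, hf⟩
    refine ⟨f 1 - f 0, f 0, sub_ne_zero.mpr (hbij.injective.ne one_ne_zero), ?_⟩
    exact IsAlexanderQuandleHom.eq_affine_zmod hf hm₀ hm₁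
  · rintro ⟨l, μ, hl, hf⟩
    obtain rfl : f = fun x => l * x + μ := funext hf
    exact ⟨bijective_affine hl μ, isAlexanderQuandleHom_affine _ l μ⟩

/-- For an odd prime `p` and an integer `m` with `1 < m < p`, a map
`f : ZMod p → ZMod p` is a quandle automorphism of the linear Alexander quandle
`LAQ(p, m)` (a bijection with `f(m·a + (1−m)·b) = m·f(a) + (1−m)·f(b)` for all `a, b`)
if and only if `f` is an affine map `x ↦ l·x + μ` with `l ≠ 0`. -/
theorem laq_automorphism_iff_affine (p : ℕ) (hp : p.Prime) (hodd : Odd p)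
    (m : ℤ) (hm1 : 1 < m) (hmp : m < p)
    (f : ZMod p → ZMod p) :
    (Function.Bijective f ∧
      ∀ a b : ZMod p, f ((m : ZMod p) * a + (1 - (m : ZMod p)) * b) =
        (m : ZMod p) * f a + (1 - (m : ZMod p)) * f b) ↔
    ∃ (l μ : ZMod p), l ≠ 0 ∧ ∀ x : ZMod p, f x = l * x + μ :=
  laq_automorphism_iff_affine_general p hp m hm1 hmp f
end

section
/- Let p be an odd prime and m an integer with 1 < m < p. Let g : ZMod p → ZMod p satisfy g(0) = 0 and g(m·a + (1−m)·b) = m·g(a) + (1−m)·g(b) for all a, b ∈ ZMod p. Then for every integer k and every x ∈ ZMod p, g(m·k·x) = m·k·g(x) in ZMod p. -/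
/-- For an odd prime `p` and an integer `m` with `1 < m < p`, if
`g : ZMod p → ZMod p` satisfies `g 0 = 0` and
`g(m·a + (1−m)·b) = m·g(a) + (1−m)·g(b)` for all `a, b`, then for every integer `k`
and every `x`, `g(m·k·x) = m·k·g(x)`. -/
theorem laq_automorphism_step (p : ℕ) (hp : p.Prime) (hodd : Odd p)
    (m : ℤ) (hm1 : 1 < m) (hmp : m < p)
    (g : ZMod p → ZMod p) (hg0 : g 0 = 0)
    (hg : ∀ a b : ZMod p, g ((m : ZMod p) * a + (1 - (m : ZMod p)) * b) =
      (m : ZMod p) * g a + (1 - (m : ZMod p)) * g b) :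
    ∀ (k : ℤ) (x : ZMod p),
      g ((m : ZMod p) * (k : ZMod p) * x) = (m : ZMod p) * (k : ZMod p) * g x := by
  haveI : Fact p.Prime := ⟨hp⟩
  have hpI : (1 : ℤ) < (p : ℤ) := by exact_mod_cast lt_trans hm1 hmp
  have hmne : (m : ZMod p) ≠ 0 := by
    rw [Ne, ZMod.intCast_zmod_eq_zero_iff_dvd]
    intro h
    have := Int.le_of_dvd (by linarith) h
    linarith
  have hm1ne : (1 : ZMod p) - (m : ZMod p) ≠ 0 := by
    have : ((1 - m : ℤ) : ZMod p) ≠ 0 := by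
      rw [Ne, ZMod.intCast_zmod_eq_zero_iff_dvd]
      intro h
      have h2 := Int.le_of_dvd (by linarith) ((dvd_neg).2 h)
      simp at h2
      linarith
    simpa using this
  have h1 : ∀ a, g ((m : ZMod p) * a) = (m : ZMod p) * g a := by
    intro a
    have := hg a 0
    simpa [hg0] using this
  have h2 : ∀ b, g ((1 - (m : ZMod p)) * b) = (1 - (m : ZMod p)) * g b := by
    intro b
    have := hg 0 b
    simpa [hg0] using this
  have hadd : ∀ u v, g (u + v) = g u + g v := by
    intro u v
    have := hg (((m : ZMod p))⁻¹ * u) ((1 - (m : ZMod p))⁻¹ * v)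
    rw [← mul_assoc, ← mul_assoc, mul_inv_cancel₀ hmne, mul_inv_cancel₀ hm1ne,
      one_mul, one_mul] at this
    rw [this, ← h1, ← h2, ← mul_assoc, ← mul_assoc, mul_inv_cancel₀ hmne,
      mul_inv_cancel₀ hm1ne, one_mul, one_mul]
  intro k x
  let φ : ZMod p →+ ZMod p := AddMonoidHom.mk' g hadd
  have hx : g ((k : ZMod p) * x) = (k : ZMod p) * g x := by
    have := map_zsmul φ k x
    simpa [φ, zsmul_eq_mul] using this
  rw [mul_assoc, h1, hx, mul_assoc]
end

section
/- Let p be an odd prime and m an integer with 1 < m and 2m < p. Let a, b, c be nonnegative integers with m·a < p, m·b < p and m·c < p (i.e., a, b, c are representatives in the set S = { x ∈ ℤ : 0 ≤ x < p/m }). If c ≡ m·a + (1−m)·b (mod p), then the equality c = m·a + (1−m)·b holds over the integers. -/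
/-- Let `p` be an odd prime and `m` an integer with `1 < m` and `2m < p`.
If `a, b, c` are nonnegative integers with `m·a < p`, `m·b < p`, `m·c < p` (i.e. they lie in
the set `S = {x ∈ ℤ : 0 ≤ x < p/m}`) and `c ≡ m·a + (1−m)·b (mod p)`, then the equality
`c = m·a + (1−m)·b` holds over the integers. -/
theorem obstruction_small_m (p : ℕ) (hp : p.Prime) (hodd : Odd p)
    (m : ℤ) (hm1 : 1 < m) (hmp : 2 * m < (p : ℤ))
    (a b c : ℤ) (ha0 : 0 ≤ a) (hb0 : 0 ≤ b) (hc0 : 0 ≤ c)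
    (ha : m * a < (p : ℤ)) (hb : m * b < (p : ℤ)) (hc : m * c < (p : ℤ))
    (hmod : c ≡ m * a + (1 - m) * b [ZMOD (p : ℤ)]) :
    c = m * a + (1 - m) * b := by
  have hdvd : (p : ℤ) ∣ (m * a + (1 - m) * b) - c := hmod.dvd
  have hzero : (m * a + (1 - m) * b) - c = 0 := by
    refine Int.eq_zero_of_abs_lt_dvd hdvd ?_
    rw [abs_lt]
    constructor
    · nlinarith [mul_pos (sub_pos.2 hm1) (sub_pos.2 hb), mul_nonneg (mul_nonneg (by linarith : (0:ℤ) ≤ m) (by linarith : (0:ℤ) ≤ m)) ha0]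
    · nlinarith [mul_nonneg (sub_nonneg.2 hm1.le) hb0]
  linarith
end

section
/- Let p be an odd prime and m an integer with p + 1 ≤ 2m and m < p. Let a, b, c be nonnegative integers with (p+1−m)·a < p, (p+1−m)·b < p and (p+1−m)·c < p (i.e., a, b, c are representatives in the set S = { x ∈ ℤ : 0 ≤ x < p/(p+1−m) }). If c ≡ m·a + (1−m)·b (mod p), then the equality (p+1−m)·b = (p−m)·a + c holds over the integers. -/
/-- Let `p` be an odd prime and `m` an integer with `p + 1 ≤ 2m` and
`m < p`.  If `a, b, c` are nonnegative integers with `(p+1−m)·a < p`, `(p+1−m)·b < p`,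
`(p+1−m)·c < p` (i.e. they lie in the set `S = {x ∈ ℤ : 0 ≤ x < p/(p+1−m)}`) and
`c ≡ m·a + (1−m)·b (mod p)`, then `(p+1−m)·b = (p−m)·a + c` holds over the integers. -/
theorem obstruction_large_m (p : ℕ) (hp : p.Prime) (hodd : Odd p)
    (m : ℤ) (hm1 : (p : ℤ) + 1 ≤ 2 * m) (hmp : m < (p : ℤ))
    (a b c : ℤ) (ha0 : 0 ≤ a) (hb0 : 0 ≤ b) (hc0 : 0 ≤ c)
    (ha : ((p : ℤ) + 1 - m) * a < (p : ℤ))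
    (hb : ((p : ℤ) + 1 - m) * b < (p : ℤ))
    (hc : ((p : ℤ) + 1 - m) * c < (p : ℤ))
    (hmod : c ≡ m * a + (1 - m) * b [ZMOD (p : ℤ)]) :
    ((p : ℤ) + 1 - m) * b = ((p : ℤ) - m) * a + c := by
  set q : ℤ := (p : ℤ) + 1 - m with hq
  have hq1 : 1 ≤ q := by omega
  have hdvd : (p : ℤ) ∣ (q * b - (q - 1) * a - c) := by
    have h1 : (p : ℤ) ∣ (m * a + (1 - m) * b - c) := (Int.ModEq.dvd hmod)
    have h2 : q * b - (q - 1) * a - c =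
        (m * a + (1 - m) * b - c) + (p : ℤ) * (b - a) := by rw [hq]; ring
    rw [h2]
    exact dvd_add h1 (Dvd.intro _ rfl)
  -- bound: (q-1)*a + c < p
  have hub : (q - 1) * a + c < (p : ℤ) := by
    have key : q * ((q - 1) * a + c) < q * (p : ℤ) := by
      have h1 : (q - 1) * (q * a) ≤ (q - 1) * (p : ℤ) :=
        mul_le_mul_of_nonneg_left (le_of_lt ha) (by omega)
      nlinarith
    exact lt_of_mul_lt_mul_left key (by omega)
  have habs : |q * b - (q - 1) * a - c| < (p : ℤ) := by
    rw [abs_lt]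
    constructor
    · nlinarith [mul_nonneg (by omega : (0:ℤ) ≤ q) hb0]
    · nlinarith [mul_nonneg (by omega : (0:ℤ) ≤ q - 1) ha0]
  have h0 := Int.eq_zero_of_abs_lt_dvd hdvd habs
  have h3 : (q - 1) * a = ((p : ℤ) - m) * a := by rw [show q - 1 = (p:ℤ) - m by omega]
  linarith
end
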